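/- For every integer k ≥ 2 and every positive integer i, writing s(i) = Σ_{a ∈ iΔ_k ∩ ℤ²} a for the sum of lattice points in iΔ_k and E(i) = #(iΔ_k ∩ ℤ²), one has vol(Δ_k)·s(i) − i·E(i)·∫_{Δ_k} x dv = (i(i+1)k(k−1)/24)·(k−1, −2), which is nonzero. In particular the Chow-semistability obstruction is nonvanishing for the Hirzebruch surfaces. -/

import Mathlib

open MeasureTheory Pointwise

/-- The Delzant polygon of the (k-1)-st Hirzebruch surface. -/
noncomputable def deltaK (k : ℤ) : Set (ℝ × ℝ) :=
  convexHull ℝ ({(0, 0), (0, 1), (1, 1), ((k : ℝ), 0)} : Set (ℝ × ℝ))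

/-- The lattice points of a subset of `ℝ × ℝ`. -/
def latPts (S : Set (ℝ × ℝ)) : Set (ℤ × ℤ) :=
  {p | ((p.1 : ℝ), (p.2 : ℝ)) ∈ S}

/-- The sum of the lattice points contained in a subset of `ℝ × ℝ`. -/
noncomputable def latSum (S : Set (ℝ × ℝ)) : ℝ × ℝ :=
  ∑ᶠ p ∈ latPts S, (((p.1 : ℝ), (p.2 : ℝ)) : ℝ × ℝ)

open Set

/-!
`Δ_k` is the trapezoid `0 ≤ y ≤ 1, 0 ≤ x ≤ k - (k - 1) y`, so `iΔ_k ∩ ℤ²` consists of the rows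
`y = 0, …, i` with `x = 0, …, ik - (k - 1) y`. Slicing along `y` (Fubini for the area and the
moment, row by row for the lattice count and sum) reduces every ingredient to an integral over
`[0, 1]` or a sum over `0, …, n` of a quadratic polynomial, so the obstruction is a polynomial
identity in `i` and `k`; its second coordinate `-i(i + 1)k(k - 1)/12` is negative for `k ≥ 2`.
-/

theorem convexHull_trapezoid {k : ℝ} (hk : 0 < k) :
    convexHull ℝ ({(0, 0), (0, 1), (1, 1), (k, 0)} : Set (ℝ × ℝ)) =
      {p | p.2 ∈ Icc 0 1 ∧ p.1 ∈ Icc 0 (k - (k - 1) * p.2)} := by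
  apply subset_antisymm
  · refine convexHull_min ?_ ?_
    · rintro p (rfl | rfl | rfl | rfl) <;> norm_num [hk.le]
    · rintro p ⟨⟨hp₀, hp₁⟩, hp₂, hp₃⟩ q ⟨⟨hq₀, hq₁⟩, hq₂, hq₃⟩ a b ha hb hab
      simp only [mem_ofPred_eq, Prod.fst_add, Prod.snd_add, Prod.smul_fst, Prod.smul_snd,
        smul_eq_mul, mem_Icc]
      refine ⟨⟨by positivity, ?_⟩, by positivity, ?_⟩ <;>
        nlinarith [mul_le_mul_of_nonneg_left hp₁ ha, mul_le_mul_of_nonneg_left hq₁ hb,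
          mul_le_mul_of_nonneg_left hp₃ ha, mul_le_mul_of_nonneg_left hq₃ hb]
  · rintro ⟨x, y⟩ ⟨hy, hx⟩
    -- `(x, y)` lies on the horizontal segment from the left edge to the slanted edge.
    have hleft : ((0 : ℝ), y) ∈ segment ℝ ((0 : ℝ), (0 : ℝ)) (0, 1) := by
      rw [← Prod.image_mk_segment_right, segment_eq_Icc zero_le_one]
      exact ⟨y, hy, rfl⟩
    have hright : (k - (k - 1) * y, y) ∈ segment ℝ (k, (0 : ℝ)) (1, 1) :=
      ⟨1 - y, y, by linarith [hy.2], hy.1, by ring, by ext <;> simp; ring⟩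
    refine (convex_convexHull ℝ _).segment_subset
      (segment_subset_convexHull (by simp) (by simp) hleft)
      (segment_subset_convexHull (by simp) (by simp) hright) ?_
    rw [← Prod.image_mk_segment_left, segment_eq_Icc (by linarith [hx.1, hx.2])]
    exact ⟨x, hx, rfl⟩

theorem deltaK_eq {k : ℤ} (hk : 0 < k) :
    deltaK k = {p | p.2 ∈ Icc 0 1 ∧ p.1 ∈ Icc 0 ((k : ℝ) - (k - 1) * p.2)} :=
  convexHull_trapezoid (by exact_mod_cast hk)

theorem smul_deltaK {k : ℤ} (hk : 0 < k) {c : ℝ} (hc : 0 < c) :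
    c • deltaK k = {p | p.2 ∈ Icc 0 c ∧ p.1 ∈ Icc 0 (c * k - (k - 1) * p.2)} := by
  ext p
  obtain ⟨q, rfl⟩ : ∃ q, c • q = p := ⟨c⁻¹ • p, smul_inv_smul₀ hc.ne' p⟩
  rw [smul_mem_smul_set_iff₀ hc.ne', deltaK_eq hk]
  simp only [mem_ofPred_eq, Prod.smul_fst, Prod.smul_snd, smul_eq_mul, mem_Icc]
  rw [show c * k - (k - 1) * (c * q.2) = c * (k - (k - 1) * q.2) by ring]
  simp only [mul_nonneg_iff_of_pos_left hc, mul_le_iff_le_one_right hc, mul_le_mul_iff_right₀ hc]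

theorem isCompact_deltaK (k : ℤ) : IsCompact (deltaK k) :=
  (toFinite _).isCompact_convexHull (𝕜 := ℝ)

section Slices

variable {α β E : Type*} [MeasurableSpace α] [MeasurableSpace β] {μ : Measure α} {ν : Measure β}
  [SFinite μ] [SFinite ν] [NormedAddCommGroup E] [NormedSpace ℝ E]

theorem setIntegral_prod_eq_integral_slices {s : Set β} {t : β → Set α} {f : α × β → E}
    (hs : MeasurableSet s) (hS : MeasurableSet {p : α × β | p.2 ∈ s ∧ p.1 ∈ t p.2})
    (hf : IntegrableOn f {p | p.2 ∈ s ∧ p.1 ∈ t p.2} (μ.prod ν)) :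
    ∫ p in {p | p.2 ∈ s ∧ p.1 ∈ t p.2}, f p ∂(μ.prod ν) = ∫ y in s, ∫ x in t y, f (x, y) ∂μ ∂ν := by
  rw [← integral_indicator hS, integral_prod_symm _ (hf.integrable_indicator hS),
    ← integral_indicator hs]
  congr 1 with y
  by_cases hy : y ∈ s
  · have ht : MeasurableSet (t y) := by simpa [hy] using measurable_prodMk_right hS (y := y)
    rw [indicator_of_mem hy, ← integral_indicator ht]
    congr 1 with x
    by_cases hx : x ∈ t y <;> simp [indicator, hx, hy]
  · simp [hy]

end Slices

theorem setIntegral_deltaK {k : ℤ} (hk : 0 < k) {f : ℝ × ℝ → ℝ} (hf : Continuous f) :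
    ∫ p in deltaK k, f p = ∫ y in (0 : ℝ)..1, ∫ x in (0 : ℝ)..(k - (k - 1) * y), f (x, y) := by
  have hmeas := (isCompact_deltaK k).isClosed.measurableSet
  have hint := hf.continuousOn.integrableOn_compact (μ := volume) (isCompact_deltaK k)
  rw [deltaK_eq hk] at hmeas hint ⊢
  rw [Measure.volume_eq_prod] at hint ⊢
  refine (setIntegral_prod_eq_integral_slices (t := fun y => Icc 0 ((k : ℝ) - (k - 1) * y))
    measurableSet_Icc hmeas hint).trans ?_
  rw [integral_Icc_eq_integral_Ioc, ← intervalIntegral.integral_of_le zero_le_one]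
  refine intervalIntegral.integral_congr fun y hy => ?_
  rw [uIcc_of_le zero_le_one] at hy
  have hk' : (1 : ℝ) ≤ k := by exact_mod_cast hk
  rw [integral_Icc_eq_integral_Ioc, ← intervalIntegral.integral_of_le (by nlinarith [hy.1, hy.2])]

theorem integral_unitInterval_of_eq_quadratic {f : ℝ → ℝ} (a b c : ℝ)
    (hf : ∀ y, f y = a + b * y + c * y ^ 2) : ∫ y in (0 : ℝ)..1, f y = a + b / 2 + c / 3 := by
  simp_rw [hf]
  rw [intervalIntegral.integral_add, intervalIntegral.integral_add,
    intervalIntegral.integral_const_mul, intervalIntegral.integral_const_mul,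
    intervalIntegral.integral_const, integral_id, integral_pow]
  · norm_num [div_eq_mul_inv]
  all_goals exact Continuous.intervalIntegrable (by fun_prop) _ _

theorem volume_deltaK {k : ℤ} (hk : 0 < k) : (volume (deltaK k)).toReal = (k + 1) / 2 := by
  have h := setIntegral_deltaK hk (f := fun _ => (1 : ℝ)) continuous_const
  rw [setIntegral_const, smul_eq_mul, mul_one] at h
  rw [← measureReal_def, h, integral_unitInterval_of_eq_quadratic k (1 - k) 0 fun y => by
    rw [intervalIntegral.integral_const, smul_eq_mul]; ring]
  ring

theorem integral_deltaK {k : ℤ} (hk : 0 < k) :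
    ∫ p in deltaK k, p = (((k : ℝ) ^ 2 + k + 1) / 6, ((k : ℝ) + 2) / 6) := by
  have hint : IntegrableOn (fun p : ℝ × ℝ => p) (deltaK k) :=
    continuous_id.continuousOn.integrableOn_compact (isCompact_deltaK k)
  calc ∫ p in deltaK k, p = (∫ p in deltaK k, p.1, ∫ p in deltaK k, p.2) :=
        integral_pair hint.fst hint.snd
    _ = _ := by
      rw [setIntegral_deltaK hk continuous_fst, setIntegral_deltaK hk continuous_snd,
        integral_unitInterval_of_eq_quadratic (k ^ 2 / 2) (-k * (k - 1)) ((k - 1) ^ 2 / 2)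
          fun y => by rw [integral_id]; ring,
        integral_unitInterval_of_eq_quadratic 0 k (1 - k) fun y => by
          rw [intervalIntegral.integral_const, smul_eq_mul]; ring]
      ext <;> ring

noncomputable def underGraph (n : ℤ) (w : ℤ → ℤ) : Finset (ℤ × ℤ) :=
  (Finset.Icc 0 n).biUnion fun y => (Finset.Icc 0 (w y)).image (·, y)

theorem mem_underGraph {n : ℤ} {w : ℤ → ℤ} {p : ℤ × ℤ} :
    p ∈ underGraph n w ↔ p.2 ∈ Finset.Icc 0 n ∧ p.1 ∈ Finset.Icc 0 (w p.2) := by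
  obtain ⟨x, y⟩ := p
  simp [underGraph, and_comm]

theorem sum_underGraph {M : Type*} [AddCommMonoid M] (n : ℤ) (w : ℤ → ℤ) (f : ℤ × ℤ → M) :
    ∑ p ∈ underGraph n w, f p = ∑ y ∈ Finset.Icc 0 n, ∑ x ∈ Finset.Icc 0 (w y), f (x, y) :=
  Finset.sum_finset_product_right _ _ _ fun _ => mem_underGraph

theorem latPts_smul_deltaK {k : ℤ} (hk : 0 < k) {i : ℕ} (hi : 0 < i) :
    latPts ((i : ℝ) • deltaK k) = underGraph i fun y => i * k - (k - 1) * y := by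
  ext p
  simp only [latPts, smul_deltaK hk (Nat.cast_pos.mpr hi), mem_ofPred_eq, Finset.mem_coe,
    mem_underGraph, mem_Icc, Finset.mem_Icc]
  norm_cast

theorem sum_Icc_zero_eq_quadratic {n : ℤ} (hn : 0 ≤ n) {f : ℤ → ℝ} (a b c : ℝ)
    (hf : ∀ y, f y = a + b * y + c * y ^ 2) :
    ∑ y ∈ Finset.Icc 0 n, f y =
      a * (n + 1) + b * (n * (n + 1) / 2) + c * (n * (n + 1) * (2 * n + 1) / 6) := by
  lift n to ℕ using hn
  induction n with
  | zero => simp [hf]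
  | succ n ih =>
    rw [Nat.cast_succ, ← Order.succ_eq_add_one,
      ← Finset.insert_Icc_right_eq_Icc_succ (by simp; omega), Finset.sum_insert (by simp), ih,
      Order.succ_eq_add_one, hf]
    push_cast
    ring

theorem ncard_latPts_smul_deltaK {k : ℤ} (hk : 0 < k) {i : ℕ} (hi : 0 < i) :
    ((latPts ((i : ℝ) • deltaK k)).ncard : ℝ) = (i + 1) * (i * (k + 1) + 2) / 2 := by
  have hw : ∀ y ∈ Finset.Icc (0 : ℤ) i, 0 ≤ i * k - (k - 1) * y := fun y hy => by
    rw [Finset.mem_Icc] at hy; nlinarith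
  rw [latPts_smul_deltaK hk hi, ncard_coe_finset, Finset.card_eq_sum_ones, Nat.cast_sum,
    sum_underGraph, Finset.sum_congr rfl fun y hy =>
      sum_Icc_zero_eq_quadratic (hw y hy) 1 0 0 fun _ => by simp,
    sum_Icc_zero_eq_quadratic (Int.natCast_nonneg i) (i * k + 1) (1 - k) 0 fun _ => by
      push_cast; ring]
  push_cast
  ring

theorem latSum_smul_deltaK {k : ℤ} (hk : 0 < k) {i : ℕ} (hi : 0 < i) :
    latSum ((i : ℝ) • deltaK k) =
      ((i : ℝ) * (i + 1) * (2 * i * (k ^ 2 + k + 1) + k ^ 2 + k + 4) / 12,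
        (i : ℝ) * (i + 1) * (i * (k + 2) - k + 4) / 6) := by
  have hw : ∀ y ∈ Finset.Icc (0 : ℤ) i, 0 ≤ i * k - (k - 1) * y := fun y hy => by
    rw [Finset.mem_Icc] at hy; nlinarith
  rw [latSum, latPts_smul_deltaK hk hi, finsum_mem_coe_finset]
  ext
  · rw [Prod.fst_sum, sum_underGraph, Finset.sum_congr rfl fun y hy =>
      sum_Icc_zero_eq_quadratic (hw y hy) 0 1 0 fun _ => by simp,
      sum_Icc_zero_eq_quadratic (Int.natCast_nonneg i) (i * k * (i * k + 1) / 2)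
        ((1 - k) * (2 * i * k + 1) / 2) ((k - 1) ^ 2 / 2) fun _ => by push_cast; ring]
    push_cast
    ring
  · rw [Prod.snd_sum, sum_underGraph, Finset.sum_congr rfl fun y hy =>
      sum_Icc_zero_eq_quadratic (hw y hy) (y : ℝ) 0 0 fun _ => by simp,
      sum_Icc_zero_eq_quadratic (Int.natCast_nonneg i) 0 (i * k + 1) (1 - k) fun _ => by
        push_cast; ring]
    push_cast
    ring

theorem obstruction_deltaK_eq {k : ℤ} (hk : 0 < k) {i : ℕ} (hi : 0 < i) :
    (volume (deltaK k)).toReal • latSum ((i : ℝ) • deltaK k) -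
        ((i : ℝ) * ((latPts ((i : ℝ) • deltaK k)).ncard : ℝ)) • (∫ x in deltaK k, x) =
      ((i : ℝ) * (i + 1) * k * (k - 1) / 24) • ((k : ℝ) - 1, -2) := by
  rw [volume_deltaK hk, latSum_smul_deltaK hk hi, ncard_latPts_smul_deltaK hk hi,
    integral_deltaK hk, Prod.smul_mk, Prod.smul_mk, Prod.smul_mk, Prod.mk_sub_mk]
  simp only [smul_eq_mul]
  congr 1 <;> ring

/-- The Chow-semistability obstruction is nonvanishing for Hirzebruch surfaces. -/
theorem obstruction_deltaK (k : ℤ) (hk : 2 ≤ k) (i : ℕ) (hi : 1 ≤ i) :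
    (volume (deltaK k)).toReal • latSum ((i : ℝ) • deltaK k) -
        ((i : ℝ) * ((latPts ((i : ℝ) • deltaK k)).ncard : ℝ)) • (∫ x in deltaK k, x) =
      (((i : ℝ) * ((i : ℝ) + 1) * (k : ℝ) * ((k : ℝ) - 1)) / 24) •
        (((k : ℝ) - 1, -2) : ℝ × ℝ) ∧
    (volume (deltaK k)).toReal • latSum ((i : ℝ) • deltaK k) -
        ((i : ℝ) * ((latPts ((i : ℝ) • deltaK k)).ncard : ℝ)) • (∫ x in deltaK k, x) ≠ 0 := by
  have hformula := obstruction_deltaK_eq (by omega : 0 < k) hi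
  have hi' : (0 : ℝ) < i := by exact_mod_cast hi
  have hk' : (1 : ℝ) < k := by exact_mod_cast hk
  have hcoeff : 0 < (i : ℝ) * (i + 1) * k * (k - 1) / 24 := by
    apply div_pos _ (by norm_num)
    exact mul_pos (mul_pos (mul_pos hi' (by linarith)) (by linarith)) (by linarith)
  refine ⟨hformula, hformula ▸ smul_ne_zero hcoeff.ne' fun h => ?_⟩
  simpa using congrArg Prod.snd h
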